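/- arXiv:2401.05592 — 2 statements merged into one kernel-verified Lean document; each statement's English description precedes it below -/
import Mathlib

section
/- Let W be a capacity-ranked generalized Wilson loop diagram (rk(M(W)) equals the total capacity c(P)) and F a cyclic flat of M(W). Then the sum over propagators of the restricted capacities c_F(p) = min(c(p), |End(F) ∩ E(p)|) equals rk_{M(W)}(F). -/
open Finset

variable {n : ℕ} [NeZero n] {E P : Type*} [Fintype E] [DecidableEq E]
  [Fintype P] [DecidableEq P]

/-- The set of ends of a generalized Wilson loop diagram supported on the
vertex set `U ⊆ [n]`. -/
def Ends (supp : E → Finset (Fin n)) (U : Finset (Fin n)) : Finset E :=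
  Finset.univ.filter fun e => (supp e ∩ U).Nonempty

/-- The capacity (rank in the ends matroid `⊕_p U(c(p), |E(p)|)`) of a set of
ends `S`. -/
def capRank (prop : E → P) (c : P → ℕ) (S : Finset E) : ℕ :=
  ∑ p : P, min (S.filter fun e => prop e = p).card (c p)

/-- Rado independence for the generalized Wilson loop diagram: `V ⊆ [n]` is
independent in `M(W)` iff `|U| ≤ c(End(U))` for every `U ⊆ V`. -/
def IndepW (prop : E → P) (c : P → ℕ) (supp : E → Finset (Fin n))
    (V : Finset (Fin n)) : Prop :=
  ∀ U ∈ V.powerset, U.card ≤ capRank prop c (Ends supp U)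

instance (prop : E → P) (c : P → ℕ) (supp : E → Finset (Fin n)) :
    DecidablePred (IndepW prop c supp) := fun V =>
  inferInstanceAs (Decidable (∀ U ∈ V.powerset, U.card ≤ capRank prop c (Ends supp U)))

/-- The rank function of `M(W)`: the size of a largest independent subset. -/
def rkW (prop : E → P) (c : P → ℕ) (supp : E → Finset (Fin n))
    (V : Finset (Fin n)) : ℕ :=
  (V.powerset.filter fun T => IndepW prop c supp T).sup Finset.card

/-- A flat of `M(W)`. -/
def FlatW (prop : E → P) (c : P → ℕ) (supp : E → Finset (Fin n))
    (F : Finset (Fin n)) : Prop :=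
  ∀ v ∉ F, rkW prop c supp (insert v F) ≠ rkW prop c supp F

/-- A circuit of `M(W)`: a minimal dependent set. -/
def CircuitW (prop : E → P) (c : P → ℕ) (supp : E → Finset (Fin n))
    (C : Finset (Fin n)) : Prop :=
  ¬ IndepW prop c supp C ∧ ∀ v ∈ C, IndepW prop c supp (C.erase v)

/-- A cyclic flat of `M(W)`: a flat that is a union of circuits. -/
def CyclicFlatW (prop : E → P) (c : P → ℕ) (supp : E → Finset (Fin n))
    (F : Finset (Fin n)) : Prop :=
  FlatW prop c supp F ∧ ∀ v ∈ F, ∃ C ⊆ F, CircuitW prop c supp C ∧ v ∈ C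

/-- Connectivity of the restriction `M(W)|F`: no partition of `F` into two
nonempty parts on which the rank is additive. -/
def ConnectedOnW (prop : E → P) (c : P → ℕ) (supp : E → Finset (Fin n))
    (F : Finset (Fin n)) : Prop :=
  ∀ F₁ ⊆ F, F₁.Nonempty → (F \ F₁).Nonempty →
    rkW prop c supp F₁ + rkW prop c supp (F \ F₁) ≠ rkW prop c supp F

/-!
The rank of `M(W)` obeys Rado's formula `rk F = min_{U ⊆ F} (c(End U) + |F \ U|)`, which holds for
any set function that vanishes on `∅` and is monotone and submodular, as `U ↦ c(End U)` is. If a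
minimizer `U` missed a point of a circuit `C ⊆ F`, then `U ∪ C` would do strictly better, because
`c(End C) < |C|` while every proper part of `C` is independent. So a minimizer contains every
circuit in `F`; for a union of circuits it is `F` itself, and `rk F = c(End F) = Σ_p c_F(p)`.
-/

open Finset

section Rado

variable {α : Type*}

def RadoIndep (f : Finset α → ℕ) (V : Finset α) : Prop :=
  ∀ U ∈ V.powerset, U.card ≤ f U

instance (f : Finset α → ℕ) : DecidablePred (RadoIndep f) := fun V =>
  inferInstanceAs (Decidable (∀ U ∈ V.powerset, U.card ≤ f U))

def radoRank (f : Finset α → ℕ) (F : Finset α) : ℕ :=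
  (F.powerset.filter (RadoIndep f)).sup card

variable {f : Finset α → ℕ} {C F U V : Finset α} {v : α}

theorem RadoIndep.card_le_of_subset (hV : RadoIndep f V) (hUV : U ⊆ V) : U.card ≤ f U :=
  hV U (mem_powerset.2 hUV)

theorem radoIndep_empty : RadoIndep f ∅ := by
  simp [RadoIndep]

theorem RadoIndep.card_le_radoRank (hV : RadoIndep f V) (hVF : V ⊆ F) :
    V.card ≤ radoRank f F :=
  le_sup (f := card) (mem_filter.2 ⟨mem_powerset.2 hVF, hV⟩)

theorem exists_radoIndep_card_eq_radoRank (F : Finset α) :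
    ∃ V ⊆ F, RadoIndep f V ∧ V.card = radoRank f F := by
  obtain ⟨V, hV, hVsup⟩ := exists_mem_eq_sup _
    ⟨∅, mem_filter.2 ⟨empty_mem_powerset F, radoIndep_empty⟩⟩ card
  rw [mem_filter, mem_powerset] at hV
  exact ⟨V, hV.1, hV.2, hVsup.symm⟩

variable [DecidableEq α]

def IsSubmodular (f : Finset α → ℕ) : Prop :=
  ∀ U V, f (U ∪ V) + f (U ∩ V) ≤ f U + f V

def RadoCircuit (f : Finset α → ℕ) (C : Finset α) : Prop :=
  ¬ RadoIndep f C ∧ ∀ v ∈ C, RadoIndep f (C.erase v)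

theorem radoRank_le_add_card_sdiff (hmono : Monotone f) (F U : Finset α) :
    radoRank f F ≤ f U + (F \ U).card := by
  refine Finset.sup_le fun V hV => ?_
  rw [mem_filter, mem_powerset] at hV
  have hVU : (V ∩ U).card ≤ f U :=
    (hV.2.card_le_of_subset inter_subset_left).trans (hmono inter_subset_right)
  have hVF : (V \ U).card ≤ (F \ U).card := card_le_card (sdiff_subset_sdiff hV.1 le_rfl)
  have := card_inter_add_card_sdiff V U
  omega

theorem RadoIndep.exists_insert_le_card (hV : RadoIndep f V)
    (hvV : ¬ RadoIndep f (insert v V)) : ∃ B ⊆ V, f (insert v B) ≤ B.card := by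
  simp only [RadoIndep, mem_powerset, not_forall, not_le, exists_prop] at hvV
  obtain ⟨A, hA, hfA⟩ := hvV
  have hvA : v ∈ A := by
    by_contra hvA
    exact (hV.card_le_of_subset ((subset_insert_iff_of_notMem hvA).1 hA)).not_gt hfA
  refine ⟨A.erase v, (erase_subset_erase v hA).trans (erase_insert_subset v V), ?_⟩
  rw [insert_erase hvA, card_erase_of_mem hvA]
  omega

theorem RadoIndep.apply_union_le_card_union (hsub : IsSubmodular f) (hV : RadoIndep f V)
    {S₁ S₂ : Finset α} (hS₁ : S₁ ⊆ V) (h₁ : f S₁ ≤ S₁.card) (h₂ : f S₂ ≤ S₂.card) :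
    f (S₁ ∪ S₂) ≤ (S₁ ∪ S₂).card := by
  have := hsub S₁ S₂
  have := hV.card_le_of_subset (inter_subset_left.trans hS₁ : S₁ ∩ S₂ ⊆ V)
  have := card_union_add_card_inter S₁ S₂
  omega

theorem RadoIndep.exists_greatest_tight (h0 : f ∅ = 0) (hsub : IsSubmodular f)
    (hV : RadoIndep f V) : ∃ T ⊆ V, f T ≤ T.card ∧ ∀ S ⊆ V, f S ≤ S.card → S ⊆ T := by
  let tight := V.powerset.filter fun S => f S ≤ S.card
  refine ⟨tight.sup id, Finset.sup_le fun S hS => mem_powerset.1 (mem_filter.1 hS).1, ?_,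
    fun S hSV hS => le_sup (f := id) (mem_filter.2 ⟨mem_powerset.2 hSV, hS⟩)⟩
  refine (sup_induction (p := fun S => S ⊆ V ∧ f S ≤ S.card) ⟨empty_subset V, h0.le⟩
    (fun S₁ h₁ S₂ h₂ => ⟨union_subset h₁.1 h₂.1,
      hV.apply_union_le_card_union hsub h₁.1 h₁.2 h₂.2⟩)
    fun S hS => ?_).2
  rw [mem_filter, mem_powerset] at hS
  exact hS

theorem apply_insert_le_of_insert_le_card (hmono : Monotone f) (hsub : IsSubmodular f)
    {B X : Finset α} (hBX : B ⊆ X) (hB : B.card ≤ f B) (hBv : f (insert v B) ≤ B.card) :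
    f (insert v X) ≤ f X := by
  have := hsub X (insert v B)
  rw [union_insert, union_eq_left.2 hBX] at this
  have := hmono (subset_inter hBX (subset_insert v B))
  omega

theorem apply_union_le_of_forall_insert_le {T S : Finset α}
    (h : ∀ X, T ⊆ X → ∀ v ∈ S, f (insert v X) ≤ f X) : f (T ∪ S) ≤ f T := by
  induction S using Finset.induction_on with
  | empty => rw [union_empty]
  | insert a S _ ih =>
    rw [union_insert]
    exact (h _ subset_union_left a (mem_insert_self a S)).trans
      (ih fun X hX v hv => h X hX v (mem_insert_of_mem hv))

/-- The minimizer is `T ∪ (F \ V)`, where `V` is a largest independent subset of `F` and `T` the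
largest subset of `V` with `f T ≤ |T|`: every `v ∈ F \ V` is blocked by such a subset of `V`, so
adding `v` to a superset of `T` does not increase `f`. -/
theorem exists_add_card_sdiff_le_radoRank (h0 : f ∅ = 0) (hmono : Monotone f)
    (hsub : IsSubmodular f) (F : Finset α) :
    ∃ U ⊆ F, f U + (F \ U).card ≤ radoRank f F := by
  obtain ⟨V, hVF, hV, hVrk⟩ := exists_radoIndep_card_eq_radoRank (f := f) F
  obtain ⟨T, hTV, hT, hTmax⟩ := hV.exists_greatest_tight h0 hsub
  have hspan : ∀ X, T ⊆ X → ∀ v ∈ F \ V, f (insert v X) ≤ f X := by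
    intro X hTX v hv
    rw [mem_sdiff] at hv
    have hvV : ¬ RadoIndep f (insert v V) := fun hvV => by
      have := hvV.card_le_radoRank (insert_subset hv.1 hVF)
      rw [card_insert_of_notMem hv.2] at this
      omega
    obtain ⟨B, hBV, hBv⟩ := hV.exists_insert_le_card hvV
    have hB := hV.card_le_of_subset hBV
    have hBT := hTmax B hBV ((hmono (subset_insert v B)).trans hBv)
    exact apply_insert_le_of_insert_le_card hmono hsub (hBT.trans hTX) hB hBv
  refine ⟨T ∪ F \ V, union_subset (hTV.trans hVF) sdiff_subset, ?_⟩
  have hcompl : F \ (T ∪ F \ V) = V \ T := by grind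
  have := apply_union_le_of_forall_insert_le hspan
  have := card_sdiff_add_card_eq_card hTV
  rw [hcompl]
  omega

theorem RadoCircuit.apply_lt_card (hC : RadoCircuit f C) : f C < C.card := by
  refine not_le.1 fun hCf => hC.1 fun A hA => ?_
  obtain rfl | hAC := (mem_powerset.1 hA).eq_or_ssubset
  · exact hCf
  · obtain ⟨w, hwC, hAw⟩ := ssubset_iff_exists_subset_erase.1 hAC
    exact (hC.2 w hwC).card_le_of_subset hAw

theorem RadoCircuit.subset_of_add_card_sdiff_le_radoRank (hmono : Monotone f)
    (hsub : IsSubmodular f) (hC : RadoCircuit f C) (hCF : C ⊆ F)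
    (hU : f U + (F \ U).card ≤ radoRank f F) : C ⊆ U := by
  intro v hvC
  by_contra hvU
  have hCU : (C ∩ U).card ≤ f (C ∩ U) :=
    (hC.2 v hvC).card_le_of_subset fun x hx => by grind
  have := hC.apply_lt_card
  have := hsub U C
  rw [inter_comm] at this
  have hUC := radoRank_le_add_card_sdiff hmono F (U ∪ C)
  rw [show F \ (U ∪ C) = (F \ U) \ (C \ U) by grind] at hUC
  have := card_sdiff_add_card_eq_card (sdiff_subset_sdiff hCF (subset_refl U))
  have := card_inter_add_card_sdiff C U
  omega

theorem radoRank_eq_of_forall_mem_circuit (h0 : f ∅ = 0) (hmono : Monotone f)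
    (hsub : IsSubmodular f) (hF : ∀ v ∈ F, ∃ C ⊆ F, RadoCircuit f C ∧ v ∈ C) :
    radoRank f F = f F := by
  obtain ⟨U, hUF, hU⟩ := exists_add_card_sdiff_le_radoRank h0 hmono hsub F
  have hFU : F ⊆ U := fun v hv => by
    obtain ⟨C, hCF, hC, hvC⟩ := hF v hv
    exact hC.subset_of_add_card_sdiff_le_radoRank hmono hsub hCF hU hvC
  obtain rfl := hUF.antisymm hFU
  have := radoRank_le_add_card_sdiff hmono U U
  simp only [sdiff_self, bot_eq_empty, card_empty, add_zero] at hU this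
  omega

theorem IsSubmodular.comp {β : Type*} [DecidableEq β] {f : Finset β → ℕ}
    {g : Finset α → Finset β} (hf : IsSubmodular f) (hmono : Monotone f) (hg : Monotone g)
    (hg_union : ∀ U V, g (U ∪ V) = g U ∪ g V) : IsSubmodular fun U => f (g U) := by
  intro U V
  dsimp only
  have := hmono (subset_inter (hg inter_subset_left) (hg inter_subset_right) :
    g (U ∩ V) ⊆ g U ∩ g V)
  have := hf (g U) (g V)
  rw [hg_union]
  omega

end Rado

section WilsonLoop

variable {m : ℕ} {ε π : Type*}

theorem ends_mono [Fintype ε] (supp : ε → Finset (Fin m)) :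
    Monotone (Ends supp) := fun _ _ hUV _ => by
  simp only [Ends, mem_filter, mem_univ, true_and]
  exact fun h => h.mono (inter_subset_inter subset_rfl hUV)

theorem ends_union [Fintype ε] [DecidableEq ε] (supp : ε → Finset (Fin m)) (U V : Finset (Fin m)) :
    Ends supp (U ∪ V) = Ends supp U ∪ Ends supp V := by
  simp only [Ends, ← filter_or, inter_union_distrib_left, union_nonempty]

variable [Fintype π] [DecidableEq π] (prop : ε → π) (c : π → ℕ)

theorem capRank_mono : Monotone (capRank prop c) := fun _ _ hST =>
  sum_le_sum fun _ _ => min_le_min_right _ (card_le_card (filter_subset_filter _ hST))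

theorem capRank_isSubmodular [DecidableEq ε] : IsSubmodular (capRank prop c) := by
  intro S T
  simp only [capRank, ← sum_add_distrib, filter_union, filter_inter_distrib]
  refine sum_le_sum fun p _ => ?_
  set Sp := S.filter fun e => prop e = p
  set Tp := T.filter fun e => prop e = p
  have := card_union_add_card_inter Sp Tp
  have := card_le_card (subset_union_left : Sp ⊆ Sp ∪ Tp)
  have := card_le_card (subset_union_right : Tp ⊆ Sp ∪ Tp)
  omega

theorem rkW_eq_radoRank [Fintype ε] (supp : ε → Finset (Fin m)) :
    rkW prop c supp = radoRank fun U => capRank prop c (Ends supp U) := by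
  -- not `rfl`: the two `DecidablePred` instances agree only up to `Subsingleton`
  funext F
  unfold rkW radoRank
  congr

end WilsonLoop

theorem cyclicFlat_capacity_eq_rank_general
    (prop : E → P) (c : P → ℕ) (supp : E → Finset (Fin n))
    (F : Finset (Fin n)) (hF : CyclicFlatW prop c supp F) :
    ∑ p : P, min (c p) (((Ends supp F).filter fun e => prop e = p).card) =
      rkW prop c supp F := by
  have hsub : IsSubmodular fun U => capRank prop c (Ends supp U) :=
    (capRank_isSubmodular prop c).comp (capRank_mono prop c) (ends_mono supp) (ends_union supp)
  have hmono : Monotone fun U => capRank prop c (Ends supp U) :=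
    (capRank_mono prop c).comp (ends_mono supp)
  have h0 : capRank prop c (Ends supp ∅) = 0 := by simp [capRank, Ends]
  rw [rkW_eq_radoRank, radoRank_eq_of_forall_mem_circuit h0 hmono hsub hF.2]
  exact sum_congr rfl fun p _ => min_comm _ _

/-- in a capacity-ranked generalized Wilson loop diagram, for
every cyclic flat `F` of `M(W)`, the sum over all propagators of the restricted
capacities `c_F(p) = min(c(p), |End(F) ∩ E(p)|)` equals the rank of `F`. -/
theorem cyclicFlat_capacity_eq_rank
    (prop : E → P) (c : P → ℕ) (supp : E → Finset (Fin n))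
    (hpos : ∀ p : P, 0 < c p)
    (hle : ∀ p : P, c p ≤ (Finset.univ.filter fun e => prop e = p).card)
    (hsupp : ∀ e : E, (∃ i : Fin n, supp e = {i}) ∨
      ∃ i : Fin n, supp e = ({i, i + 1} : Finset (Fin n)))
    (hcapranked : rkW prop c supp Finset.univ = ∑ p : P, c p)
    (F : Finset (Fin n)) (hF : CyclicFlatW prop c supp F) :
    ∑ p : P, min (c p) (((Ends supp F).filter fun e => prop e = p).card) =
      rkW prop c supp F :=
  cyclicFlat_capacity_eq_rank_general prop c supp F hF
end

section
/- Let W be a capacity-ranked generalized Wilson loop diagram such that every vertex supports a propagator, F a connected dependent flat of M(W) of non-full rank, and q a propagator with c_F(q) < c(q). Then every end of q is either supported entirely inside F or entirely outside F; i.e., no end of q is an edge-end with one supporting vertex in F and one outside F. -/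
open Finset

variable {n : ℕ} [NeZero n] {E P : Type*} [Fintype E] [DecidableEq E]
  [Fintype P] [DecidableEq P]

set_option linter.unusedSectionVars false

lemma ends_mono_s12 (supp : E → Finset (Fin n)) {U V : Finset (Fin n)} (h : U ⊆ V) :
    Ends supp U ⊆ Ends supp V := by
  intro e he
  simp only [Ends, mem_filter, mem_univ, true_and] at he ⊢
  exact he.mono (inter_subset_inter (Finset.Subset.refl _) h)

lemma indepW_subset {prop : E → P} {c : P → ℕ} {supp : E → Finset (Fin n)}
    {I J : Finset (Fin n)} (hI : IndepW prop c supp I) (h : J ⊆ I) :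
    IndepW prop c supp J :=
  fun U hU => hI U (mem_powerset.mpr ((mem_powerset.mp hU).trans h))

lemma indepW_empty (prop : E → P) (c : P → ℕ) (supp : E → Finset (Fin n)) :
    IndepW prop c supp (∅ : Finset (Fin n)) := by
  intro U hU
  simp only [powerset_empty, mem_singleton] at hU
  simp [hU]

lemma le_rkW {prop : E → P} {c : P → ℕ} {supp : E → Finset (Fin n)}
    {I V : Finset (Fin n)} (hIV : I ⊆ V) (hI : IndepW prop c supp I) :
    I.card ≤ rkW prop c supp V :=
  le_sup (mem_filter.mpr ⟨mem_powerset.mpr hIV, hI⟩)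

lemma exists_max_indep (prop : E → P) (c : P → ℕ) (supp : E → Finset (Fin n))
    (V : Finset (Fin n)) :
    ∃ I ⊆ V, IndepW prop c supp I ∧ I.card = rkW prop c supp V := by
  have hne : (V.powerset.filter fun T => IndepW prop c supp T).Nonempty :=
    ⟨∅, mem_filter.mpr ⟨mem_powerset.mpr (empty_subset _), indepW_empty _ _ _⟩⟩
  obtain ⟨I, hI, hIc⟩ := Finset.exists_mem_eq_sup _ hne Finset.card
  rw [mem_filter, mem_powerset] at hI
  exact ⟨I, hI.1, hI.2, hIc.symm⟩

lemma rkW_le_erase_add_one (prop : E → P) (c : P → ℕ) (supp : E → Finset (Fin n))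
    (F : Finset (Fin n)) (v : Fin n) :
    rkW prop c supp F ≤ rkW prop c supp (F.erase v) + 1 := by
  obtain ⟨I, hIF, hInd, hcard⟩ := exists_max_indep prop c supp F
  rw [← hcard]
  have h1 : (I.erase v).card ≤ rkW prop c supp (F.erase v) :=
    le_rkW (erase_subset_erase _ hIF) (indepW_subset hInd (erase_subset _ _))
  by_cases hv : v ∈ I
  · rw [← card_erase_add_one hv]; omega
  · rw [erase_eq_of_notMem hv] at h1; omega

/-- Key extension lemma: if the count of `q`-ends on `F` is below capacity and
`e` is a `q`-end with `supp e ∩ F = {v}`, then any independent subset of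
`F.erase v` extends by `v`. -/
lemma insert_indepW (prop : E → P) (c : P → ℕ) (supp : E → Finset (Fin n))
    {F I : Finset (Fin n)} {v : Fin n} {q : P} {e : E}
    (hv : v ∈ F) (heq : prop e = q) (hint : supp e ∩ F = {v})
    (hcount : ((Ends supp F).filter fun e => prop e = q).card < c q)
    (hIF : I ⊆ F.erase v) (hInd : IndepW prop c supp I) :
    IndepW prop c supp (insert v I) := by
  have hvs : v ∈ supp e := by
    have : v ∈ supp e ∩ F := by rw [hint]; exact mem_singleton_self v
    exact (mem_inter.mp this).1
  intro U hU
  rw [mem_powerset] at hU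
  by_cases hvU : v ∈ U
  · have hU' : U.erase v ⊆ I := by
      intro x hx
      rw [mem_erase] at hx
      rcases mem_insert.mp (hU hx.2) with h | h
      · exact absurd h hx.1
      · exact h
    have hUF : U ⊆ F := by
      intro x hx
      rcases mem_insert.mp (hU hx) with h | h
      · exact h ▸ hv
      · exact (erase_subset _ _) (hIF h)
    have h1 := hInd (U.erase v) (mem_powerset.mpr hU')
    have heU : e ∈ Ends supp U := by
      simp only [Ends, mem_filter, mem_univ, true_and]
      exact ⟨v, mem_inter.mpr ⟨hvs, hvU⟩⟩
    have heU' : e ∉ Ends supp (U.erase v) := by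
      simp only [Ends, mem_filter, mem_univ, true_and]
      rintro ⟨x, hx⟩
      rw [mem_inter, mem_erase] at hx
      have : x ∈ supp e ∩ F := mem_inter.mpr ⟨hx.1, hUF hx.2.2⟩
      rw [hint, mem_singleton] at this
      exact hx.2.1 this
    -- capRank strict increase
    have key : capRank prop c (Ends supp (U.erase v)) < capRank prop c (Ends supp U) := by
      apply Finset.sum_lt_sum
      · intro p _
        exact min_le_min (card_le_card (filter_subset_filter _
          (ends_mono_s12 supp (erase_subset _ _)))) le_rfl
      · refine ⟨q, mem_univ q, ?_⟩
        have hsub : (Ends supp (U.erase v)).filter (fun e => prop e = q) ⊆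
            (Ends supp U).filter (fun e => prop e = q) :=
          filter_subset_filter _ (ends_mono_s12 supp (erase_subset _ _))
        have hlt : ((Ends supp (U.erase v)).filter fun e => prop e = q).card <
            ((Ends supp U).filter fun e => prop e = q).card := by
          apply card_lt_card
          rw [Finset.ssubset_iff_of_subset hsub]
          exact ⟨e, mem_filter.mpr ⟨heU, heq⟩, fun h => heU' (mem_filter.mp h).1⟩
        have hcq : ((Ends supp U).filter fun e => prop e = q).card ≤
            ((Ends supp F).filter fun e => prop e = q).card :=
          card_le_card (filter_subset_filter _ (ends_mono_s12 supp hUF))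
        omega
    have hcard : U.card = (U.erase v).card + 1 := (card_erase_add_one hvU).symm
    omega
  · apply hInd U
    rw [mem_powerset]
    intro x hx
    rcases mem_insert.mp (hU hx) with h | h
    · exact absurd (h ▸ hx) hvU
    · exact h


lemma singleton_indepW (prop : E → P) (c : P → ℕ) (supp : E → Finset (Fin n))
    (hpos : ∀ p : P, 0 < c p) {v : Fin n} {e : E} (hvs : v ∈ supp e) :
    IndepW prop c supp ({v} : Finset (Fin n)) := by
  intro U hU
  rw [mem_powerset, Finset.subset_singleton_iff] at hU
  rcases hU with rfl | rfl
  · simp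
  · have heU : e ∈ (Ends supp {v}).filter (fun e' => prop e' = prop e) := by
      rw [mem_filter]
      refine ⟨?_, rfl⟩
      simp only [Ends, mem_filter, mem_univ, true_and]
      exact ⟨v, mem_inter.mpr ⟨hvs, mem_singleton_self v⟩⟩
    have h1 : 1 ≤ min ((Ends supp {v}).filter (fun e' => prop e' = prop e)).card
        (c (prop e)) :=
      le_min (card_pos.mpr ⟨e, heU⟩) (hpos _)
    rw [card_singleton]
    refine h1.trans ?_
    exact Finset.single_le_sum
      (f := fun p => min ((Ends supp {v}).filter (fun e' => prop e' = p)).card (c p))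
      (fun p _ => Nat.zero_le _) (mem_univ (prop e))

lemma main_contra (prop : E → P) (c : P → ℕ) (supp : E → Finset (Fin n))
    (hpos : ∀ p : P, 0 < c p) {F : Finset (Fin n)}
    (hdep : ¬ IndepW prop c supp F) (hconn : ConnectedOnW prop c supp F)
    {q : P} {e : E} {v : Fin n}
    (heq : prop e = q) (hv : v ∈ F) (hint : supp e ∩ F = {v})
    (hcount : ((Ends supp F).filter fun e => prop e = q).card < c q) : False := by
  have hvs : v ∈ supp e := by
    have : v ∈ supp e ∩ F := by rw [hint]; exact mem_singleton_self v
    exact (mem_inter.mp this).1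
  have hsing : IndepW prop c supp ({v} : Finset (Fin n)) :=
    singleton_indepW prop c supp hpos hvs
  -- F.erase v is nonempty
  have hne : (F.erase v).Nonempty := by
    by_contra h
    rw [not_nonempty_iff_eq_empty] at h
    have hFv : F = {v} := by
      apply Finset.Subset.antisymm
      · intro x hx
        by_contra hxv
        have : x ∈ F.erase v := mem_erase.mpr ⟨by simpa using hxv, hx⟩
        simp [h] at this
      · simpa using hv
    exact hdep (hFv ▸ hsing)
  -- rkW {v} = 1
  have hrk1 : rkW prop c supp ({v} : Finset (Fin n)) = 1 := by
    apply le_antisymm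
    · apply Finset.sup_le
      intro T hT
      rw [mem_filter, mem_powerset] at hT
      calc T.card ≤ ({v} : Finset (Fin n)).card := card_le_card hT.1
        _ = 1 := card_singleton v
    · have := le_rkW (Finset.Subset.refl {v}) hsing
      simpa using this
  -- rkW F = rkW (F.erase v) + 1
  have h1 : rkW prop c supp F ≤ rkW prop c supp (F.erase v) + 1 :=
    rkW_le_erase_add_one prop c supp F v
  have h2 : rkW prop c supp (F.erase v) + 1 ≤ rkW prop c supp F := by
    obtain ⟨I, hIF, hInd, hcard⟩ := exists_max_indep prop c supp (F.erase v)
    have hins : IndepW prop c supp (insert v I) :=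
      insert_indepW prop c supp hv heq hint hcount hIF hInd
    have hvI : v ∉ I := fun h => (mem_erase.mp (hIF h)).1 rfl
    have hinsF : insert v I ⊆ F :=
      insert_subset hv (hIF.trans (erase_subset _ _))
    have := le_rkW hinsF hins
    rw [card_insert_of_notMem hvI, hcard] at this
    exact this
  have hsdiff : F \ {v} = F.erase v := by
    ext x; simp [mem_erase, and_comm]
  exact hconn {v} (singleton_subset_iff.mpr hv) ⟨v, mem_singleton_self v⟩
    (by rw [hsdiff]; exact hne)
    (by rw [hrk1, hsdiff]; omega)


/-- Lemma `q` ends in or out: let `W` be a capacity-ranked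
generalized Wilson loop diagram in which every vertex supports a propagator
end, let `F` be a connected dependent flat of `M(W)` of non-full rank, and let
`q` be a propagator whose capacity drops on `F`, i.e.
`min(c(q), |End(F) ∩ E(q)|) < c(q)`.  Then every end of `q` is supported either
entirely inside `F` or entirely outside `F`. -/
theorem q_ends_in_or_out
    (prop : E → P) (c : P → ℕ) (supp : E → Finset (Fin n))
    (hpos : ∀ p : P, 0 < c p)
    (hle : ∀ p : P, c p ≤ (Finset.univ.filter fun e => prop e = p).card)
    (hsupp : ∀ e : E, (∃ i : Fin n, supp e = {i}) ∨
      ∃ i : Fin n, supp e = ({i, i + 1} : Finset (Fin n)))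
    (hcapranked : rkW prop c supp Finset.univ = ∑ p : P, c p)
    (hallsupp : ∀ v : Fin n, ∃ e : E, v ∈ supp e)
    (F : Finset (Fin n))
    (hflat : FlatW prop c supp F)
    (hdep : ¬ IndepW prop c supp F)
    (hconn : ConnectedOnW prop c supp F)
    (hrk : rkW prop c supp F < rkW prop c supp Finset.univ)
    (q : P)
    (hq : min (c q) (((Ends supp F).filter fun e => prop e = q).card) < c q) :
    ∀ e : E, prop e = q → supp e ⊆ F ∨ supp e ∩ F = ∅ := by
  have hcount : ((Ends supp F).filter fun e => prop e = q).card < c q := by omega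
  intro e heq
  rcases hsupp e with ⟨i, hi⟩ | ⟨i, hi⟩
  · by_cases hiF : i ∈ F
    · left; rw [hi]; simpa using hiF
    · right; rw [hi]; simp [Finset.singleton_inter_of_notMem hiF]
  · by_cases hiF : i ∈ F <;> by_cases hjF : (i + 1) ∈ F
    · left; rw [hi]; exact insert_subset hiF (by simpa using hjF)
    · exfalso
      apply main_contra prop c supp hpos hdep hconn heq hiF _ hcount
      rw [hi]
      ext x
      simp only [mem_inter, mem_insert, mem_singleton]
      constructor
      · rintro ⟨rfl | rfl, hxF⟩
        · rfl
        · exact absurd hxF hjF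
      · rintro rfl; exact ⟨Or.inl rfl, hiF⟩
    · exfalso
      apply main_contra prop c supp hpos hdep hconn heq hjF _ hcount
      rw [hi]
      ext x
      simp only [mem_inter, mem_insert, mem_singleton]
      constructor
      · rintro ⟨rfl | rfl, hxF⟩
        · exact absurd hxF hiF
        · rfl
      · rintro rfl; exact ⟨Or.inr rfl, hjF⟩
    · right; rw [hi]
      ext x
      simp only [mem_inter, mem_insert, mem_singleton, notMem_empty, iff_false]
      rintro ⟨rfl | rfl, hxF⟩
      · exact hiF hxF
      · exact hjF hxF
end
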